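/- arXiv:math/0504423 — 2 statements merged into one kernel-verified Lean document; each statement's English description precedes it below -/
import Mathlib

section
/- For λ, μ ∈ Λ: if λ ⊆ μ then N_λ N_μ ⊆ N_μ and N_λ N_μ ≠ {0}; if μ ⊆ λ then N_λ N_μ ⊆ N_λ and N_λ N_μ ≠ {0}; and if neither λ ⊆ μ nor μ ⊆ λ, then N_λ N_μ = {0} (here N_λ N_μ denotes the set of products ab with a ∈ N_λ, b ∈ N_μ). -/
open scoped Matrix.Norms.L2Operator ENNReal

noncomputable section
set_option synthInstance.maxHeartbeats 1000000
set_option maxHeartbeats 2000000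
set_option linter.unusedSectionVars false

instance matrixNormedStarGroup {n : Type*} [Fintype n] [DecidableEq n] :
    NormedStarGroup (Matrix n n ℂ) := CStarRing.to_normedStarGroup

/-- a self-adjoint idempotent in a C*-algebra has norm at most one. -/
lemma norm_le_one_of_proj {E : Type*} [NonUnitalNormedRing E] [StarRing E] [CStarRing E]
    {p : E} (h1 : star p = p) (h2 : p * p = p) : ‖p‖ ≤ 1 := by
  have h := CStarRing.norm_star_mul_self (x := p)
  rw [h1, h2] at h
  nlinarith [norm_nonneg p]

lemma star_stdBasisMatrix' {n : Type*} [Fintype n] [DecidableEq n] (a b : n) :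
    star (Matrix.single a b (1 : ℂ)) = Matrix.single b a 1 := by
  ext i j
  simp only [Matrix.star_apply, Matrix.single, Matrix.of_apply]
  by_cases h1 : a = j <;> by_cases h2 : b = i <;> simp [h1, h2, and_comm]

lemma mul_collapse {n ι : Type*} [Fintype n] [DecidableEq n] [Fintype ι] [DecidableEq ι]
    {f g k : ι → n} (hg : Function.Injective g) :
    (∑ u : ι, Matrix.single (f u) (g u) (1 : ℂ)) *
      (∑ u : ι, Matrix.single (g u) (k u) (1 : ℂ)) =
      ∑ u : ι, Matrix.single (f u) (k u) (1 : ℂ) := by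
  rw [Finset.sum_mul_sum]
  refine Finset.sum_congr rfl fun u _ => ?_
  rw [Finset.sum_eq_single u]
  · rw [Matrix.single_mul_single_same, one_mul]
  · intro u' _ hne
    exact Matrix.single_mul_single_of_ne (h := hg.ne (Ne.symm hne)) ..
  · intro hu
    exact absurd (Finset.mem_univ u) hu

lemma norm_sum_std_le_one {n ι : Type*} [Fintype n] [DecidableEq n] [Fintype ι] [DecidableEq ι]
    {f g : ι → n} (hf : Function.Injective f) (hg : Function.Injective g) :
    ‖∑ u : ι, Matrix.single (f u) (g u) (1 : ℂ)‖ ≤ 1 := by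
  set v := ∑ u : ι, Matrix.single (f u) (g u) (1 : ℂ) with hv
  have hstar : star v = ∑ u : ι, Matrix.single (g u) (f u) (1 : ℂ) := by
    rw [hv, star_sum]
    exact Finset.sum_congr rfl fun u _ => star_stdBasisMatrix' _ _
  have hvv : star v * v = ∑ u : ι, Matrix.single (g u) (g u) (1 : ℂ) := by
    rw [hstar, hv]; exact mul_collapse hf
  have hproj : (∑ u : ι, Matrix.single (g u) (g u) (1 : ℂ)) *
      (∑ u : ι, Matrix.single (g u) (g u) (1 : ℂ)) =
      ∑ u : ι, Matrix.single (g u) (g u) (1 : ℂ) := mul_collapse hg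
  have hprojstar : star (∑ u : ι, Matrix.single (g u) (g u) (1 : ℂ)) =
      ∑ u : ι, Matrix.single (g u) (g u) (1 : ℂ) := by
    rw [star_sum]
    exact Finset.sum_congr rfl fun u _ => star_stdBasisMatrix' _ _
  have h1 : ‖star v * v‖ ≤ 1 := by
    rw [hvv]; exact norm_le_one_of_proj hprojstar hproj
  have h2 : ‖star v * v‖ = ‖v‖ * ‖v‖ := CStarRing.norm_star_mul_self
  nlinarith [norm_nonneg v]

variable {X : Type*} [DecidableEq X]

/-- `l(λ)`: the set of bijections `t : {1,…,n} → λ` where `n = |λ|`, realized as the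
equivalences `Fin λ.card ≃ λ`; in particular `l(∅)` is a one-point set. -/
abbrev Lbl (lam : Finset X) : Type _ := Fin lam.card ≃ {x // x ∈ lam}

/-- `M_λ`: a copy of the C*-algebra of `n! × n!` complex matrices (`n = |λ|`), with the
matrix unit `{e^{(λ)}_{s,t}}` indexed by `s, t ∈ l(λ)` (the standard basis matrices),
endowed with the operator norm. -/
abbrev Mlam (lam : Finset X) : Type _ := Matrix (Lbl lam) (Lbl lam) ℂ

/-- The bounded product `∏_{μ∈Λ} M_μ` with the supremum norm. -/
abbrev ProdM (X : Type*) [DecidableEq X] : Type _ := lp (fun mu : Finset X => Mlam mu) ∞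

/-- For disjoint finsets, `λ ∪ μ` is in bijection with `λ ⊕ μ`. -/
def unionEquiv {lam mu : Finset X} (h : Disjoint lam mu) :
    ({x // x ∈ lam} ⊕ {x // x ∈ mu}) ≃ {x // x ∈ lam ∪ mu} :=
  (Equiv.Set.union (Finset.disjoint_coe.mpr h)).symm.trans
    (Equiv.subtypeEquivRight fun x => by simp)

/-- The concatenation `ts ∈ l(λ∪μ)` of `t ∈ l(λ)` and `s ∈ l(μ)`, for disjoint `λ`, `μ`:
`(ts)(i) = t(i)` for `1 ≤ i ≤ n` and `(ts)(i) = s(i-n)` for `n < i ≤ n+m`. -/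
def concat {lam mu : Finset X} (h : Disjoint lam mu) (t : Lbl lam) (s : Lbl mu) :
    Lbl (lam ∪ mu) :=
  (finCongr (Finset.card_union_of_disjoint h)).trans
    ((finSumFinEquiv.symm).trans ((Equiv.sumCongr t s).trans (unionEquiv h)))

/-- Transport of labellings along an equality of finsets. -/
def lblCast {lam mu : Finset X} (h : lam = mu) : Lbl lam ≃ Lbl mu :=
  Equiv.cast (by rw [h])

/-- `su ∈ l(μ)`: the concatenation of `s ∈ l(λ)` and `u ∈ l(μ∖λ)`, for `λ ⊆ μ`. -/
def extLbl {lam mu : Finset X} (h : lam ⊆ mu) (s : Lbl lam) (u : Lbl (mu \ lam)) : Lbl mu :=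
  lblCast (Finset.union_sdiff_of_subset h) (concat Finset.disjoint_sdiff s u)

lemma concat_right_injective {lam mu : Finset X} (h : Disjoint lam mu) (t : Lbl lam) :
    Function.Injective fun s : Lbl mu => concat h t s := by
  intro u u' he
  ext j
  have h1 := congrArg (fun e : Lbl (lam ∪ mu) =>
    e ((finCongr (Finset.card_union_of_disjoint h)).symm (finSumFinEquiv (Sum.inr j)))) he
  simp only [concat, Equiv.trans_apply, Equiv.apply_symm_apply, Equiv.symm_apply_apply,
    Equiv.sumCongr_apply, Sum.map_inr] at h1
  have h2 := (unionEquiv h).injective h1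
  simpa using congrArg Subtype.val (Sum.inr.inj h2)

lemma extLbl_right_injective {lam mu : Finset X} (h : lam ⊆ mu) (s : Lbl lam) :
    Function.Injective fun u : Lbl (mu \ lam) => extLbl h s u := by
  intro u u' he
  exact concat_right_injective Finset.disjoint_sdiff s
    ((lblCast (Finset.union_sdiff_of_subset h)).injective he)

/-- `ι_{μ,λ} : M_λ → M_μ` (for `λ ⊆ μ`): the *-homomorphism determined by
`ι_{μ,λ}(e^{(λ)}_{s,t}) = ∑_{u ∈ l(μ∖λ)} e^{(μ)}_{su,tu}` and linearity. -/
def iotaMat {lam mu : Finset X} (h : lam ⊆ mu) (x : Mlam lam) : Mlam mu :=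
  ∑ s : Lbl lam, ∑ t : Lbl lam, ∑ u : Lbl (mu \ lam),
    x s t • Matrix.single (extLbl h s u) (extLbl h t u) (1 : ℂ)

lemma norm_iotaMat_le {lam mu : Finset X} (h : lam ⊆ mu) (x : Mlam lam) :
    ‖iotaMat h x‖ ≤ ∑ s : Lbl lam, ∑ t : Lbl lam, ‖x s t‖ := by
  refine (norm_sum_le _ _).trans (Finset.sum_le_sum fun s _ => ?_)
  refine (norm_sum_le _ _).trans (Finset.sum_le_sum fun t _ => ?_)
  rw [← Finset.smul_sum, norm_smul]
  calc ‖x s t‖ * ‖∑ u : Lbl (mu \ lam),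
        Matrix.single (extLbl h s u) (extLbl h t u) (1 : ℂ)‖
      ≤ ‖x s t‖ * 1 := by
        refine mul_le_mul_of_nonneg_left ?_ (norm_nonneg _)
        exact norm_sum_std_le_one (extLbl_right_injective h s) (extLbl_right_injective h t)
    _ = ‖x s t‖ := mul_one _

lemma memℓp_iota (lam : Finset X) (x : Mlam lam) :
    Memℓp (fun mu : Finset X => (if h : lam ⊆ mu then iotaMat h x else 0 : Mlam mu)) ∞ := by
  apply memℓp_infty
  refine ⟨∑ s : Lbl lam, ∑ t : Lbl lam, ‖x s t‖, ?_⟩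
  rintro r ⟨mu, rfl⟩
  dsimp only
  split_ifs with h
  · exact norm_iotaMat_le h x
  · simp only [norm_zero]
    positivity

/-- `ι_λ : M_λ → ∏_{μ∈Λ} M_μ`: `ι_λ(x)(μ) = ι_{μ,λ}(x)` if `λ ⊆ μ`, and `0` otherwise. -/
def iotaElem (lam : Finset X) (x : Mlam lam) : ProdM X :=
  ⟨fun mu => (if h : lam ⊆ mu then iotaMat h x else 0 : Mlam mu), memℓp_iota lam x⟩

/-- `f^{(λ)}_{s,t} = ι_λ(e^{(λ)}_{s,t})`. -/
def fElem (lam : Finset X) (s t : Lbl lam) : ProdM X :=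
  iotaElem lam (Matrix.single s t 1)

/-- `N_λ = ι_λ(M_λ) ⊆ ∏_{μ∈Λ} M_μ`. -/
def Nlam (lam : Finset X) : Set (ProdM X) := Set.range (iotaElem lam)

section Stmt12Aux
variable {X : Type*} [DecidableEq X]

lemma lblCast_val {lam mu : Finset X} (h : lam = mu) (e : Lbl lam) (j : Fin mu.card)
    (i : Fin lam.card) (hj : (j : ℕ) = (i : ℕ)) : ((lblCast h e j : X)) = ((e i : X)) := by
  subst h
  obtain rfl : j = i := Fin.ext hj
  rfl

lemma concat_val_left {lam mu : Finset X} (h : Disjoint lam mu) (t : Lbl lam) (s : Lbl mu)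
    (j : Fin (lam ∪ mu).card) (i : Fin lam.card) (hj : (j : ℕ) = (i : ℕ)) :
    ((concat h t s j : X)) = (t i : X) := by
  have hcast : (finCongr (Finset.card_union_of_disjoint h) j) = Fin.castAdd mu.card i :=
    Fin.ext (by simpa using hj)
  simp only [concat, Equiv.trans_apply, hcast, finSumFinEquiv_symm_apply_castAdd,
    Equiv.sumCongr_apply, Sum.map_inl, unionEquiv, Equiv.subtypeEquivRight_apply,
    Equiv.Set.union_symm_apply_left]
  rfl

lemma concat_val_right {lam mu : Finset X} (h : Disjoint lam mu) (t : Lbl lam) (s : Lbl mu)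
    (j : Fin (lam ∪ mu).card) (i : Fin mu.card) (hj : (j : ℕ) = lam.card + (i : ℕ)) :
    ((concat h t s j : X)) = (s i : X) := by
  have hcast : (finCongr (Finset.card_union_of_disjoint h) j) = Fin.natAdd lam.card i :=
    Fin.ext (by simpa using hj)
  simp only [concat, Equiv.trans_apply, hcast, finSumFinEquiv_symm_apply_natAdd,
    Equiv.sumCongr_apply, Sum.map_inr, unionEquiv, Equiv.subtypeEquivRight_apply,
    Equiv.Set.union_symm_apply_right]
  rfl


lemma extLbl_val_left {lam mu : Finset X} (h : lam ⊆ mu) (s : Lbl lam) (u : Lbl (mu \ lam))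
    (j : Fin mu.card) (i : Fin lam.card) (hj : (j : ℕ) = (i : ℕ)) :
    ((extLbl h s u j : X)) = (s i : X) := by
  unfold extLbl
  rw [lblCast_val (Finset.union_sdiff_of_subset h) _ j
    ⟨(j : ℕ), by rw [Finset.union_sdiff_of_subset h]; exact j.2⟩ rfl]
  exact concat_val_left _ _ _ _ i hj

lemma extLbl_val_right {lam mu : Finset X} (h : lam ⊆ mu) (s : Lbl lam) (u : Lbl (mu \ lam))
    (j : Fin mu.card) (i : Fin (mu \ lam).card) (hj : (j : ℕ) = lam.card + (i : ℕ)) :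
    ((extLbl h s u j : X)) = (u i : X) := by
  unfold extLbl
  rw [lblCast_val (Finset.union_sdiff_of_subset h) _ j
    ⟨(j : ℕ), by rw [Finset.union_sdiff_of_subset h]; exact j.2⟩ rfl]
  exact concat_val_right _ _ _ _ i hj

/-- concatenation `l(μ\λ) × l(ν\μ) → l(ν\λ)`. -/
def midConcat {lam mu nu : Finset X} (h12 : lam ⊆ mu) (h23 : mu ⊆ nu)
    (u : Lbl (mu \ lam)) (v : Lbl (nu \ mu)) : Lbl (nu \ lam) :=
  lblCast ((Finset.union_comm _ _).trans (Finset.sdiff_union_sdiff_cancel h23 h12))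
    (concat (Finset.disjoint_sdiff.mono_left Finset.sdiff_subset) u v)

lemma midConcat_val_left {lam mu nu : Finset X} (h12 : lam ⊆ mu) (h23 : mu ⊆ nu)
    (u : Lbl (mu \ lam)) (v : Lbl (nu \ mu)) (j : Fin (nu \ lam).card)
    (i : Fin (mu \ lam).card) (hj : (j : ℕ) = (i : ℕ)) :
    ((midConcat h12 h23 u v j : X)) = (u i : X) := by
  unfold midConcat
  rw [lblCast_val ((Finset.union_comm _ _).trans (Finset.sdiff_union_sdiff_cancel h23 h12)) _ j
    ⟨(j : ℕ), by
      rw [(Finset.union_comm _ _).trans (Finset.sdiff_union_sdiff_cancel h23 h12)]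
      exact j.2⟩ rfl]
  exact concat_val_left _ _ _ _ i hj

lemma midConcat_val_right {lam mu nu : Finset X} (h12 : lam ⊆ mu) (h23 : mu ⊆ nu)
    (u : Lbl (mu \ lam)) (v : Lbl (nu \ mu)) (j : Fin (nu \ lam).card)
    (i : Fin (nu \ mu).card) (hj : (j : ℕ) = (mu \ lam).card + (i : ℕ)) :
    ((midConcat h12 h23 u v j : X)) = (v i : X) := by
  unfold midConcat
  rw [lblCast_val ((Finset.union_comm _ _).trans (Finset.sdiff_union_sdiff_cancel h23 h12)) _ j
    ⟨(j : ℕ), by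
      rw [(Finset.union_comm _ _).trans (Finset.sdiff_union_sdiff_cancel h23 h12)]
      exact j.2⟩ rfl]
  exact concat_val_right _ _ _ _ i hj

lemma extLbl_assoc {lam mu nu : Finset X} (h12 : lam ⊆ mu) (h23 : mu ⊆ nu)
    (s : Lbl lam) (u : Lbl (mu \ lam)) (v : Lbl (nu \ mu)) :
    extLbl (h12.trans h23) s (midConcat h12 h23 u v) = extLbl h23 (extLbl h12 s u) v := by
  have hlm : lam.card ≤ mu.card := Finset.card_le_card h12
  have hmn : mu.card ≤ nu.card := Finset.card_le_card h23
  have hml : (mu \ lam).card = mu.card - lam.card := Finset.card_sdiff_of_subset h12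
  have hnl : (nu \ lam).card = nu.card - lam.card := Finset.card_sdiff_of_subset (h12.trans h23)
  have hnm : (nu \ mu).card = nu.card - mu.card := Finset.card_sdiff_of_subset h23
  apply Equiv.ext
  intro j
  apply Subtype.ext
  rcases lt_or_ge (j : ℕ) lam.card with hj | hj
  · rw [extLbl_val_left _ _ _ j ⟨j, hj⟩ rfl,
      extLbl_val_left h23 _ _ j ⟨j, lt_of_lt_of_le hj hlm⟩ rfl,
      extLbl_val_left h12 _ _ _ ⟨j, hj⟩ rfl]
  · have hjn : (j : ℕ) < nu.card := j.2
    rcases lt_or_ge (j : ℕ) mu.card with hj2 | hj2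
    · rw [extLbl_val_right _ _ _ j ⟨(j : ℕ) - lam.card, by omega⟩
          (show (j : ℕ) = lam.card + ((j : ℕ) - lam.card) by omega),
        midConcat_val_left h12 h23 _ _ _ ⟨(j : ℕ) - lam.card, by omega⟩ rfl,
        extLbl_val_left h23 _ _ j ⟨j, hj2⟩ rfl,
        extLbl_val_right h12 _ _ _ ⟨(j : ℕ) - lam.card, by omega⟩
          (show (j : ℕ) = lam.card + ((j : ℕ) - lam.card) by omega)]
    · rw [extLbl_val_right _ _ _ j ⟨(j : ℕ) - lam.card, by omega⟩
          (show (j : ℕ) = lam.card + ((j : ℕ) - lam.card) by omega),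
        midConcat_val_right h12 h23 _ _ _ ⟨(j : ℕ) - mu.card, by omega⟩
          (show (j : ℕ) - lam.card = (mu \ lam).card + ((j : ℕ) - mu.card) by omega),
        extLbl_val_right h23 _ _ j ⟨(j : ℕ) - mu.card, by omega⟩
          (show (j : ℕ) = mu.card + ((j : ℕ) - mu.card) by omega)]

lemma exists_mid {lam mu nu : Finset X} (h12 : lam ⊆ mu) (h23 : mu ⊆ nu)
    (t : Lbl lam) (w : Lbl (nu \ lam)) (p : Lbl mu) (v : Lbl (nu \ mu))
    (e : extLbl (h12.trans h23) t w = extLbl h23 p v) :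
    ∃ u : Lbl (mu \ lam), extLbl h12 t u = p := by
  have hlm : lam.card ≤ mu.card := Finset.card_le_card h12
  have hmn : mu.card ≤ nu.card := Finset.card_le_card h23
  have hml : (mu \ lam).card = mu.card - lam.card := Finset.card_sdiff_of_subset h12
  have hnl : (nu \ lam).card = nu.card - lam.card := Finset.card_sdiff_of_subset (h12.trans h23)
  have key : ∀ i : Fin (mu \ lam).card,
      ((p ⟨lam.card + (i : ℕ), by have := i.2; omega⟩ : X)) ∈ mu \ lam := by
    intro i
    have hb : lam.card + (i : ℕ) < mu.card := by have := i.2; omega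
    have hbn : lam.card + (i : ℕ) < nu.card := by have := i.2; omega
    have h1 : ((extLbl h23 p v ⟨lam.card + (i : ℕ), hbn⟩ : X)) = (p ⟨lam.card + (i : ℕ), hb⟩ : X) :=
      extLbl_val_left h23 p v _ ⟨lam.card + (i : ℕ), hb⟩ rfl
    have h2 : ((extLbl (h12.trans h23) t w ⟨lam.card + (i : ℕ), hbn⟩ : X))
        = (w ⟨(i : ℕ), by have := i.2; omega⟩ : X) := extLbl_val_right _ t w _ ⟨(i : ℕ), by have := i.2; omega⟩ rfl
    have hval : ((p ⟨lam.card + (i : ℕ), hb⟩ : X)) = (w ⟨(i : ℕ), by have := i.2; omega⟩ : X) := by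
      rw [← h1, ← e, h2]
    rw [Finset.mem_sdiff]
    have hw := (w ⟨(i : ℕ), by have := i.2; omega⟩).2
    rw [Finset.mem_sdiff] at hw
    exact ⟨(p _).2, by rw [hval]; exact hw.2⟩
  set f : Fin (mu \ lam).card → {x // x ∈ mu \ lam} :=
    fun i => ⟨(p ⟨lam.card + (i : ℕ), by have := i.2; omega⟩ : X), key i⟩ with hf
  have hinj : Function.Injective f := by
    intro i i' hii
    simp only [hf, Subtype.mk.injEq] at hii
    have h2 := p.injective (Subtype.ext hii)
    simp only [Fin.mk.injEq] at h2
    exact Fin.ext (by omega)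
  have hbij : Function.Bijective f :=
    (Fintype.bijective_iff_injective_and_card f).mpr ⟨hinj, by simp⟩
  refine ⟨Equiv.ofBijective f hbij, ?_⟩
  apply Equiv.ext
  intro j
  apply Subtype.ext
  rcases lt_or_ge (j : ℕ) lam.card with hj | hj
  · have hjn : (j : ℕ) < nu.card := by omega
    rw [extLbl_val_left h12 _ _ j ⟨j, hj⟩ rfl]
    have h1 : ((extLbl h23 p v ⟨(j : ℕ), hjn⟩ : X)) = (p j : X) :=
      extLbl_val_left h23 p v _ ⟨(j : ℕ), j.2⟩ (by simp)
    have h2 : ((extLbl (h12.trans h23) t w ⟨(j : ℕ), hjn⟩ : X)) = (t ⟨j, hj⟩ : X) :=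
      extLbl_val_left _ t w _ ⟨(j : ℕ), hj⟩ rfl
    rw [← h1, ← e, h2]
  · rw [extLbl_val_right h12 _ _ j ⟨(j : ℕ) - lam.card, by have := j.2; omega⟩
      (show (j : ℕ) = lam.card + ((j : ℕ) - lam.card) by omega)]
    have hb2 : lam.card + ((j : ℕ) - lam.card) < mu.card := by have := j.2; omega
    show ((p ⟨lam.card + ((j : ℕ) - lam.card), hb2⟩ : X)) = (p j : X)
    have ha : (⟨lam.card + ((j : ℕ) - lam.card), hb2⟩ : Fin mu.card) = j :=
      Fin.ext (show lam.card + ((j : ℕ) - lam.card) = (j : ℕ) by omega)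
    rw [ha]

lemma subset_of_eq_extLbl {lam mu nu : Finset X} (h1 : lam ⊆ nu) (h2 : mu ⊆ nu)
    (hc : lam.card ≤ mu.card) (t : Lbl lam) (w : Lbl (nu \ lam)) (p : Lbl mu) (v : Lbl (nu \ mu))
    (e : extLbl h1 t w = extLbl h2 p v) : lam ⊆ mu := by
  intro x hx
  have hmn : mu.card ≤ nu.card := Finset.card_le_card h2
  set i := t.symm ⟨x, hx⟩ with hi
  have hti : (t i : X) = x := by rw [hi]; simp
  have hin : (i : ℕ) < nu.card := by have := i.2; omega
  have him : (i : ℕ) < mu.card := by have := i.2; omega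
  have h1' : ((extLbl h1 t w ⟨(i : ℕ), hin⟩ : X)) = x := by
    rw [extLbl_val_left h1 t w _ i rfl, hti]
  have h2' : ((extLbl h2 p v ⟨(i : ℕ), hin⟩ : X)) = (p ⟨(i : ℕ), him⟩ : X) :=
    extLbl_val_left h2 p v _ ⟨(i : ℕ), him⟩ rfl
  have : x = (p ⟨(i : ℕ), him⟩ : X) := by rw [← h1', e, h2']
  rw [this]
  exact (p _).2


lemma iotaMat_basis {lam mu : Finset X} (h : lam ⊆ mu) (s t : Lbl lam) :
    iotaMat h (Matrix.single s t 1) =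
      ∑ u : Lbl (mu \ lam),
        Matrix.single (extLbl h s u) (extLbl h t u) (1 : ℂ) := by
  unfold iotaMat
  rw [Finset.sum_eq_single s]
  · rw [Finset.sum_eq_single t]
    · simp [Matrix.single_apply_same]
    · intro t' _ hne
      refine Finset.sum_eq_zero fun u _ => ?_
      rw [Matrix.single_apply_of_ne _ _ _ _ _ (by tauto), zero_smul]
    · intro h'; exact absurd (Finset.mem_univ t) h'
  · intro s' _ hne
    refine Finset.sum_eq_zero fun t' _ => Finset.sum_eq_zero fun u _ => ?_
    rw [Matrix.single_apply_of_ne _ _ _ _ _ (by tauto), zero_smul]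
  · intro h'; exact absurd (Finset.mem_univ s) h'

lemma iotaMat_zero {lam mu : Finset X} (h : lam ⊆ mu) : iotaMat h (0 : Mlam lam) = 0 := by
  simp [iotaMat]

lemma iotaMat_add {lam mu : Finset X} (h : lam ⊆ mu) (x y : Mlam lam) :
    iotaMat h (x + y) = iotaMat h x + iotaMat h y := by
  simp [iotaMat, Matrix.add_apply, add_smul, Finset.sum_add_distrib]

lemma iotaMat_smul {lam mu : Finset X} (h : lam ⊆ mu) (c : ℂ) (x : Mlam lam) :
    iotaMat h (c • x) = c • iotaMat h x := by
  simp [iotaMat, Matrix.smul_apply, smul_smul, Finset.smul_sum]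

lemma iotaMat_sum {lam mu : Finset X} (h : lam ⊆ mu) {ι : Type*} (S : Finset ι)
    (f : ι → Mlam lam) : iotaMat h (∑ i ∈ S, f i) = ∑ i ∈ S, iotaMat h (f i) := by
  classical
  induction S using Finset.induction_on with
  | empty => simp [iotaMat_zero]
  | insert _ _ hnotmem ih =>
    rw [Finset.sum_insert hnotmem, Finset.sum_insert hnotmem, iotaMat_add, ih]

lemma matrix_decomp {n : Type*} [Fintype n] [DecidableEq n] (y : Matrix n n ℂ) :
    y = ∑ p : n, ∑ q : n, y p q • Matrix.single p q (1 : ℂ) := by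
  conv_lhs => rw [Matrix.matrix_eq_sum_single y]
  simp [Matrix.smul_single]

lemma iotaMat_eq_sum {lam mu : Finset X} (h : lam ⊆ mu) (x : Mlam lam) :
    iotaMat h x = ∑ s : Lbl lam, ∑ t : Lbl lam,
      x s t • iotaMat h (Matrix.single s t 1) := by
  conv_lhs => rw [matrix_decomp x]
  rw [iotaMat_sum]
  refine Finset.sum_congr rfl fun s _ => ?_
  rw [iotaMat_sum]
  refine Finset.sum_congr rfl fun t _ => ?_
  rw [iotaMat_smul]


lemma key_basis {lam mu nu : Finset X} (h12 : lam ⊆ mu) (h13 : lam ⊆ nu) (h23 : mu ⊆ nu)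
    (s t : Lbl lam) (p q : Lbl mu) :
    iotaMat h13 (Matrix.single s t 1) * iotaMat h23 (Matrix.single p q 1)
      = iotaMat h23 (iotaMat h12 (Matrix.single s t 1)
          * Matrix.single p q 1) := by
  rw [iotaMat_basis h13 s t, iotaMat_basis h23 p q, iotaMat_basis h12 s t,
    Finset.sum_mul_sum, Finset.sum_mul, iotaMat_sum]
  by_cases hEx : ∃ u : Lbl (mu \ lam), extLbl h12 t u = p
  · obtain ⟨u0, hu0⟩ := hEx
    rw [Finset.sum_eq_single u0 (fun u _ hu => by
      rw [Matrix.single_mul_single_of_ne _ _ _ _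
        (fun hc => hu (extLbl_right_injective h12 t (hc.trans hu0.symm))) _, iotaMat_zero])
      (fun h' => absurd (Finset.mem_univ _) h'), ← hu0,
      Matrix.single_mul_single_same, one_mul, iotaMat_basis]
    rw [Finset.sum_comm]
    refine Finset.sum_congr rfl fun v _ => ?_
    have h1 : extLbl h13 t (midConcat h12 h23 u0 v) = extLbl h23 (extLbl h12 t u0) v :=
      extLbl_assoc h12 h23 t u0 v
    have h2 : extLbl h13 s (midConcat h12 h23 u0 v) = extLbl h23 (extLbl h12 s u0) v :=
      extLbl_assoc h12 h23 s u0 v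
    rw [Finset.sum_eq_single (midConcat h12 h23 u0 v) (fun w _ hw =>
      Matrix.single_mul_single_of_ne _ _ _ _
        (fun hc => hw (extLbl_right_injective h13 t (hc.trans h1.symm))) _)
      (fun h' => absurd (Finset.mem_univ _) h')]
    simp only [h1, h2, Matrix.single_mul_single_same, one_mul]
  · refine Eq.trans (Finset.sum_eq_zero fun w _ => Finset.sum_eq_zero fun v _ =>
      Matrix.single_mul_single_of_ne _ _ _ _
        (fun hc => hEx (exists_mid h12 h23 t w p v hc)) _) ?_
    exact (Finset.sum_eq_zero fun u _ => by
      rw [Matrix.single_mul_single_of_ne _ _ _ _ (fun hc => hEx ⟨u, hc⟩) _, iotaMat_zero]).symm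

lemma key_x {lam mu nu : Finset X} (h12 : lam ⊆ mu) (h13 : lam ⊆ nu) (h23 : mu ⊆ nu)
    (x : Mlam lam) (p q : Lbl mu) :
    iotaMat h13 x * iotaMat h23 (Matrix.single p q 1)
      = iotaMat h23 (iotaMat h12 x * Matrix.single p q 1) := by
  conv_lhs => rw [iotaMat_eq_sum h13 x]
  conv_rhs => rw [iotaMat_eq_sum h12 x]
  simp only [Finset.sum_mul, smul_mul_assoc, iotaMat_sum, iotaMat_smul]
  exact Finset.sum_congr rfl fun s _ => Finset.sum_congr rfl fun t _ => by
    rw [key_basis h12 h13 h23 s t p q]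

lemma key_matrix {lam mu nu : Finset X} (h12 : lam ⊆ mu) (h13 : lam ⊆ nu) (h23 : mu ⊆ nu)
    (x : Mlam lam) (y : Mlam mu) :
    iotaMat h13 x * iotaMat h23 y = iotaMat h23 (iotaMat h12 x * y) := by
  conv_lhs => rw [matrix_decomp y]
  conv_rhs => rw [matrix_decomp y]
  simp only [iotaMat_sum, iotaMat_smul, Finset.mul_sum, mul_smul_comm]
  exact Finset.sum_congr rfl fun p _ => Finset.sum_congr rfl fun q _ => by
    rw [key_x h12 h13 h23 x p q]

lemma iotaMat_star {lam mu : Finset X} (h : lam ⊆ mu) (x : Mlam lam) :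
    star (iotaMat h x) = iotaMat h (star x) := by
  unfold iotaMat
  conv_rhs => rw [Finset.sum_comm]
  rw [star_sum]
  refine Finset.sum_congr rfl fun a _ => ?_
  rw [star_sum]
  refine Finset.sum_congr rfl fun b _ => ?_
  rw [star_sum]
  refine Finset.sum_congr rfl fun u _ => ?_
  rw [star_smul, star_stdBasisMatrix']
  congr 1

lemma key_matrix' {lam mu nu : Finset X} (h12 : mu ⊆ lam) (h13 : lam ⊆ nu) (h23 : mu ⊆ nu)
    (x : Mlam lam) (y : Mlam mu) :
    iotaMat h13 x * iotaMat h23 y = iotaMat h13 (x * iotaMat h12 y) := by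
  have h := key_matrix h12 h23 h13 (star y) (star x)
  calc iotaMat h13 x * iotaMat h23 y
      = star (iotaMat h23 (star y) * iotaMat h13 (star x)) := by
        rw [star_mul, iotaMat_star, iotaMat_star, star_star, star_star]
    _ = star (iotaMat h13 (iotaMat h12 (star y) * star x)) := by rw [h]
    _ = iotaMat h13 (x * iotaMat h12 y) := by
        rw [iotaMat_star, star_mul, iotaMat_star, star_star, star_star]

lemma key_basis_zero {lam mu nu : Finset X} (h1 : lam ⊆ nu) (h2 : mu ⊆ nu)
    (hlm : ¬ lam ⊆ mu) (hml : ¬ mu ⊆ lam) (s t : Lbl lam) (p q : Lbl mu) :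
    iotaMat h1 (Matrix.single s t 1)
      * iotaMat h2 (Matrix.single p q 1) = 0 := by
  have key : ∀ (w : Lbl (nu \ lam)) (v : Lbl (nu \ mu)),
      extLbl h1 t w ≠ extLbl h2 p v := by
    intro w v e
    rcases le_total lam.card mu.card with hc | hc
    · exact hlm (subset_of_eq_extLbl h1 h2 hc t w p v e)
    · exact hml (subset_of_eq_extLbl h2 h1 hc p v t w e.symm)
  rw [iotaMat_basis h1 s t, iotaMat_basis h2 p q, Finset.sum_mul_sum]
  exact Finset.sum_eq_zero fun w _ => Finset.sum_eq_zero fun v _ =>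
    Matrix.single_mul_single_of_ne _ _ _ _ (key w v) _

lemma key_x_zero {lam mu nu : Finset X} (h1 : lam ⊆ nu) (h2 : mu ⊆ nu)
    (hlm : ¬ lam ⊆ mu) (hml : ¬ mu ⊆ lam) (x : Mlam lam) (p q : Lbl mu) :
    iotaMat h1 x * iotaMat h2 (Matrix.single p q 1) = 0 := by
  conv_lhs => rw [iotaMat_eq_sum h1 x]
  simp only [Finset.sum_mul, smul_mul_assoc]
  exact Finset.sum_eq_zero fun s _ => Finset.sum_eq_zero fun t _ => by
    rw [key_basis_zero h1 h2 hlm hml s t p q, smul_zero]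

lemma key_zero_matrix {lam mu nu : Finset X} (h1 : lam ⊆ nu) (h2 : mu ⊆ nu)
    (hlm : ¬ lam ⊆ mu) (hml : ¬ mu ⊆ lam) (x : Mlam lam) (y : Mlam mu) :
    iotaMat h1 x * iotaMat h2 y = 0 := by
  conv_lhs => rw [matrix_decomp y]
  simp only [iotaMat_sum, iotaMat_smul, Finset.mul_sum, mul_smul_comm]
  exact Finset.sum_eq_zero fun p _ => Finset.sum_eq_zero fun q _ => by
    rw [key_x_zero h1 h2 hlm hml x p q, smul_zero]

lemma iotaElem_apply (lam : Finset X) (x : Mlam lam) (nu : Finset X) :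
    (iotaElem lam x : ∀ mu : Finset X, Mlam mu) nu
      = if h : lam ⊆ nu then iotaMat h x else 0 := rfl

lemma iotaElem_mul_left {lam mu : Finset X} (h12 : lam ⊆ mu) (x : Mlam lam) (y : Mlam mu) :
    iotaElem lam x * iotaElem mu y = iotaElem mu (iotaMat h12 x * y) := by
  apply lp.ext
  rw [lp.infty_coeFn_mul]
  funext nu
  rw [Pi.mul_apply, iotaElem_apply, iotaElem_apply, iotaElem_apply]
  by_cases h2 : mu ⊆ nu
  · have h1 : lam ⊆ nu := h12.trans h2
    rw [dif_pos h1, dif_pos h2, dif_pos h2]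
    exact key_matrix h12 h1 h2 x y
  · rw [dif_neg h2, dif_neg h2, mul_zero]

lemma iotaElem_mul_right {lam mu : Finset X} (h21 : mu ⊆ lam) (x : Mlam lam) (y : Mlam mu) :
    iotaElem lam x * iotaElem mu y = iotaElem lam (x * iotaMat h21 y) := by
  apply lp.ext
  rw [lp.infty_coeFn_mul]
  funext nu
  rw [Pi.mul_apply, iotaElem_apply, iotaElem_apply, iotaElem_apply]
  by_cases h1 : lam ⊆ nu
  · have h2 : mu ⊆ nu := h21.trans h1
    rw [dif_pos h1, dif_pos h2, dif_pos h1]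
    exact key_matrix' h21 h1 h2 x y
  · rw [dif_neg h1, dif_neg h1, zero_mul]

lemma iotaElem_mul_zero {lam mu : Finset X} (hlm : ¬ lam ⊆ mu) (hml : ¬ mu ⊆ lam)
    (x : Mlam lam) (y : Mlam mu) : iotaElem lam x * iotaElem mu y = 0 := by
  apply lp.ext
  rw [lp.infty_coeFn_mul, lp.coeFn_zero]
  funext nu
  rw [Pi.mul_apply, iotaElem_apply, iotaElem_apply, Pi.zero_apply]
  by_cases h1 : lam ⊆ nu
  · by_cases h2 : mu ⊆ nu
    · rw [dif_pos h1, dif_pos h2]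
      exact key_zero_matrix h1 h2 hlm hml x y
    · rw [dif_neg h2, mul_zero]
  · rw [dif_neg h1, zero_mul]

lemma stdBasis_mul_self {lam mu : Finset X} (h : lam ⊆ mu) (t : Lbl lam)
    (u0 : Lbl (mu \ lam)) :
    iotaMat h (Matrix.single t t 1)
        * Matrix.single (extLbl h t u0) (extLbl h t u0) 1
      = Matrix.single (extLbl h t u0) (extLbl h t u0) 1 := by
  rw [iotaMat_basis, Finset.sum_mul, Finset.sum_eq_single u0]
  · rw [Matrix.single_mul_single_same, one_mul]
  · intro u _ hu
    exact Matrix.single_mul_single_of_ne _ _ _ _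
      (fun hc => hu (extLbl_right_injective h t hc)) _
  · intro h'; exact absurd (Finset.mem_univ _) h'

lemma self_mul_stdBasis {lam mu : Finset X} (h : lam ⊆ mu) (t : Lbl lam)
    (u0 : Lbl (mu \ lam)) :
    Matrix.single (extLbl h t u0) (extLbl h t u0) 1
        * iotaMat h (Matrix.single t t 1)
      = Matrix.single (extLbl h t u0) (extLbl h t u0) 1 := by
  have h1 := congrArg star (stdBasis_mul_self h t u0)
  rw [star_mul, star_stdBasisMatrix', iotaMat_star, star_stdBasisMatrix'] at h1
  exact h1

lemma iotaMat_basis_ne_zero {lam mu : Finset X} (h : lam ⊆ mu) (s : Lbl lam) :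
    iotaMat h (Matrix.single s s 1) ≠ 0 := by
  intro h0
  set u0 : Lbl (mu \ lam) := (mu \ lam).equivFin.symm with hu0
  have h1 : (iotaMat h (Matrix.single s s 1)) (extLbl h s u0) (extLbl h s u0) = 1 := by
    rw [iotaMat_basis, Matrix.sum_apply, Finset.sum_eq_single u0 (fun u _ hu =>
      Matrix.single_apply_of_ne _ _ _ _ _
        (fun hc => hu (extLbl_right_injective h s hc.1)))
      (fun h' => absurd (Finset.mem_univ _) h')]
    exact Matrix.single_apply_same _ _ _
  rw [h0] at h1
  simp at h1

lemma iotaElem_basis_ne_zero (mu : Finset X) (p : Lbl mu) :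
    iotaElem mu (Matrix.single p p 1) ≠ 0 := by
  intro h0
  have h1 : (iotaElem mu (Matrix.single p p 1) : ∀ nu : Finset X, Mlam nu) mu
      = ((0 : ProdM X) : ∀ nu : Finset X, Mlam nu) mu := by rw [h0]
  rw [iotaElem_apply, dif_pos (Finset.Subset.refl mu), lp.coeFn_zero, Pi.zero_apply] at h1
  exact iotaMat_basis_ne_zero (Finset.Subset.refl mu) p h1

end Stmt12Aux

/- STATEMENT 12: `N_λ N_μ ⊆ N_μ` and `N_λ N_μ ≠ {0}` if `λ ⊆ μ`; `N_λ N_μ ⊆ N_λ` and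
`N_λ N_μ ≠ {0}` if `μ ⊆ λ`; and `N_λ N_μ = {0}` otherwise. -/
theorem stmt12 [Uncountable X] (lam mu : Finset X) :
    (lam ⊆ mu →
      (∀ a ∈ Nlam lam, ∀ b ∈ Nlam mu, a * b ∈ Nlam mu) ∧
      (∃ a ∈ Nlam lam, ∃ b ∈ Nlam mu, a * b ≠ 0)) ∧
    (mu ⊆ lam →
      (∀ a ∈ Nlam lam, ∀ b ∈ Nlam mu, a * b ∈ Nlam lam) ∧
      (∃ a ∈ Nlam lam, ∃ b ∈ Nlam mu, a * b ≠ 0)) ∧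
    (¬ lam ⊆ mu → ¬ mu ⊆ lam → ∀ a ∈ Nlam lam, ∀ b ∈ Nlam mu, a * b = 0) := by
  refine ⟨fun h12 => ⟨?_, ?_⟩, fun h21 => ⟨?_, ?_⟩, fun hlm hml => ?_⟩
  · rintro a ⟨x, rfl⟩ b ⟨y, rfl⟩
    exact ⟨iotaMat h12 x * y, (iotaElem_mul_left h12 x y).symm⟩
  · set t0 : Lbl lam := lam.equivFin.symm with ht0
    set u0 : Lbl (mu \ lam) := (mu \ lam).equivFin.symm with hu0
    set p0 : Lbl mu := extLbl h12 t0 u0 with hp0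
    refine ⟨iotaElem lam (Matrix.single t0 t0 1), Set.mem_range_self _,
      iotaElem mu (Matrix.single p0 p0 1), Set.mem_range_self _, ?_⟩
    rw [iotaElem_mul_left h12, hp0, stdBasis_mul_self h12 t0 u0]
    exact iotaElem_basis_ne_zero mu p0
  · rintro a ⟨x, rfl⟩ b ⟨y, rfl⟩
    exact ⟨x * iotaMat h21 y, (iotaElem_mul_right h21 x y).symm⟩
  · set t0 : Lbl mu := mu.equivFin.symm with ht0
    set u0 : Lbl (lam \ mu) := (lam \ mu).equivFin.symm with hu0
    set p0 : Lbl lam := extLbl h21 t0 u0 with hp0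
    refine ⟨iotaElem lam (Matrix.single p0 p0 1), Set.mem_range_self _,
      iotaElem mu (Matrix.single t0 t0 1), Set.mem_range_self _, ?_⟩
    rw [iotaElem_mul_right h21, hp0, self_mul_stdBasis h21 t0 u0]
    exact iotaElem_basis_ne_zero lam p0
  · rintro a ⟨x, rfl⟩ b ⟨y, rfl⟩
    exact iotaElem_mul_zero hlm hml x y

end
end

section
/- The C*-algebra A is prime: for any two nonzero closed two-sided ideals I₁ and I₂ of A, one has I₁ ∩ I₂ ≠ {0}. -/
open scoped Matrix.Norms.L2Operator ENNReal

noncomputable section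
set_option synthInstance.maxHeartbeats 1000000
set_option maxHeartbeats 2000000
set_option linter.unusedSectionVars false

variable {X : Type*} [DecidableEq X]

/-- `A_μ = Σ_{λ⊆μ} N_λ`: the linear span of `⋃_{λ⊆μ} N_λ`. -/
def NspanUpTo (mu : Finset X) : Submodule ℂ (ProdM X) :=
  Submodule.span ℂ (⋃ lam : Finset X, ⋃ (_ : lam ⊆ mu), Nlam lam)

/-- `Σ_{λ∈Λ} N_λ`: the linear span of `⋃_{λ∈Λ} N_λ`. -/
def Nspan (X : Type*) [DecidableEq X] : Submodule ℂ (ProdM X) :=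
  Submodule.span ℂ (⋃ lam : Finset X, Nlam lam)

/-- `A`: the closure of `Σ_{λ∈Λ} N_λ` in `∏_{μ∈Λ} M_μ`. -/
def carrierA (X : Type*) [DecidableEq X] : Set (ProdM X) :=
  closure ((Nspan X : Submodule ℂ (ProdM X)) : Set (ProdM X))

/-- `I` is (the carrier of) a closed two-sided ideal of (the C*-algebra whose carrier is)
`A`: a closed linear subspace of `A` absorbing multiplication by elements of `A`. -/
def IsClosedIdealIn (A I : Set (ProdM X)) : Prop :=
  I ⊆ A ∧ IsClosed I ∧ (∃ J : Submodule ℂ (ProdM X), (J : Set (ProdM X)) = I) ∧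
    ∀ a ∈ A, ∀ b ∈ I, a * b ∈ I ∧ b * a ∈ I

section AuxPrime
open Matrix

lemma lbl_nonempty (lam : Finset X) : Nonempty (Lbl lam) :=
  ⟨(Fintype.equivFinOfCardEq (Fintype.card_coe lam)).symm⟩

lemma lbl_head_exists (s : Finset X) (a : X) (ha : a ∈ s) (pos : 0 < s.card) :
    ∃ u : Lbl s, (u ⟨0, pos⟩ : X) = a := by
  obtain ⟨e⟩ := lbl_nonempty s
  exact ⟨(Equiv.swap (⟨0, pos⟩ : Fin s.card) (e.symm ⟨a, ha⟩)).trans e, by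
    simp [Equiv.swap_apply_left]⟩

lemma card_sdiff_aux {lam mu : Finset X} (h : lam ⊆ mu) {j : ℕ} (hj : j < mu.card)
    (hj2 : ¬ j < lam.card) : j - lam.card < (mu \ lam).card := by
  have := Finset.card_sdiff_of_subset h
  omega

lemma lblCast_coe {lam mu : Finset X} (h : lam = mu) (e : Lbl lam) (j : Fin mu.card) :
    ((lblCast h e j : X)) = (e (Fin.cast (congrArg Finset.card h.symm) j) : X) := by
  subst h; rfl

lemma concat_coe {lam mu : Finset X} (hd : Disjoint lam mu) (t : Lbl lam) (s : Lbl mu)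
    (j : Fin (lam ∪ mu).card) :
    ((concat hd t s j : X)) =
      if hj : (j : ℕ) < lam.card then (t ⟨j, hj⟩ : X)
      else (s ⟨(j : ℕ) - lam.card, by
        have h1 := Finset.card_union_of_disjoint hd
        have h2 := j.isLt
        omega⟩ : X) := by
  have hcard := Finset.card_union_of_disjoint hd
  rcases Nat.lt_or_ge ((j : ℕ)) lam.card with hj | hj
  · rw [dif_pos hj]
    have e1 : finCongr hcard j = Fin.castAdd mu.card ⟨(j : ℕ), hj⟩ := by
      apply Fin.ext; simp
    simp only [concat, Equiv.trans_apply, e1, finSumFinEquiv_symm_apply_castAdd,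
      Equiv.sumCongr_apply, Sum.map_inl, unionEquiv, Equiv.Set.union_symm_apply_left,
      Equiv.subtypeEquivRight_apply]
    rfl
  · rw [dif_neg (by omega)]
    have hlt : (j : ℕ) - lam.card < mu.card := by have := j.isLt; omega
    have e1 : finCongr hcard j = Fin.natAdd lam.card ⟨(j : ℕ) - lam.card, hlt⟩ := by
      apply Fin.ext; simp; omega
    simp only [concat, Equiv.trans_apply, e1, finSumFinEquiv_symm_apply_natAdd,
      Equiv.sumCongr_apply, Sum.map_inr, unionEquiv, Equiv.Set.union_symm_apply_right,
      Equiv.subtypeEquivRight_apply]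
    rfl

lemma extLbl_coe {lam mu : Finset X} (h : lam ⊆ mu) (s : Lbl lam) (u : Lbl (mu \ lam))
    (j : Fin mu.card) :
    ((extLbl h s u j : X)) =
      if hj : (j : ℕ) < lam.card then (s ⟨j, hj⟩ : X)
      else (u ⟨(j : ℕ) - lam.card, card_sdiff_aux h j.isLt hj⟩ : X) := by
  rw [extLbl, lblCast_coe, concat_coe]
  simp only [Fin.val_cast]

lemma extLbl_coe_lt {lam mu : Finset X} (h : lam ⊆ mu) (s : Lbl lam) (u : Lbl (mu \ lam))
    (j : Fin mu.card) (hj : (j : ℕ) < lam.card) :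
    ((extLbl h s u j : X)) = (s ⟨j, hj⟩ : X) := by
  rw [extLbl_coe, dif_pos hj]

lemma extLbl_coe_ge {lam mu : Finset X} (h : lam ⊆ mu) (s : Lbl lam) (u : Lbl (mu \ lam))
    (j : Fin mu.card) (hj : lam.card ≤ (j : ℕ)) :
    ((extLbl h s u j : X)) = (u ⟨(j : ℕ) - lam.card, card_sdiff_aux h j.isLt (by omega)⟩ : X) := by
  rw [extLbl_coe, dif_neg (by omega)]

lemma extLbl_inj {lam mu : Finset X} (h : lam ⊆ mu) {s s' : Lbl lam} {u u' : Lbl (mu \ lam)}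
    (he : extLbl h s u = extLbl h s' u') : s = s' ∧ u = u' := by
  have hcard := Finset.card_le_card h
  have hsd := Finset.card_sdiff_of_subset h
  constructor
  · refine Equiv.ext fun i => Subtype.ext ?_
    have hj : ((i : ℕ)) < mu.card := lt_of_lt_of_le i.isLt hcard
    have h1 := congrArg (fun e : Lbl mu => (e ⟨(i : ℕ), hj⟩ : X)) he
    rw [extLbl_coe_lt h s u _ i.isLt, extLbl_coe_lt h s' u' _ i.isLt] at h1
    exact h1
  · refine Equiv.ext fun i => Subtype.ext ?_
    have hj : (i : ℕ) + lam.card < mu.card := by have := i.isLt; omega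
    have h1 := congrArg (fun e : Lbl mu => (e ⟨(i : ℕ) + lam.card, hj⟩ : X)) he
    rw [extLbl_coe_ge h s u _ (by simp), extLbl_coe_ge h s' u' _ (by simp)] at h1
    have e0 : (⟨(i : ℕ) + lam.card - lam.card, card_sdiff_aux h hj (by omega)⟩ :
        Fin (mu \ lam).card) = i := Fin.ext (by simp)
    rwa [e0] at h1

/-- the head condition: the first `|ν|` values of `w` lie in `ν`. -/
def headCond (nu : Finset X) {mu : Finset X} (w : Lbl mu) : Prop :=
  ∀ j : Fin mu.card, (j : ℕ) < nu.card → (w j : X) ∈ nu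

instance headCond.decidable {nu mu : Finset X} (w : Lbl mu) : Decidable (headCond nu w) :=
  inferInstanceAs (Decidable (∀ j : Fin mu.card, (j : ℕ) < nu.card → (w j : X) ∈ nu))

lemma headCond_extLbl {nu mu : Finset X} (hn : nu ⊆ mu) (s : Lbl nu) (u : Lbl (mu \ nu)) :
    headCond nu (extLbl hn s u) := fun j hj => by
  rw [extLbl_coe_lt hn s u j hj]; exact (s _).2

lemma head_bij {nu mu : Finset X} (hn : nu ⊆ mu) (w : Lbl mu) (hw : headCond nu w) :
    Function.Bijective (fun i : Fin nu.card =>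
      (⟨(w (Fin.castLE (Finset.card_le_card hn) i) : X), hw _ (by simpa using i.isLt)⟩ :
        {x // x ∈ nu})) := by
  rw [Fintype.bijective_iff_injective_and_card]
  refine ⟨fun a b hab => ?_, by simp⟩
  have h1 := congrArg Subtype.val hab
  dsimp only at h1
  have h2 := w.injective (Subtype.ext h1)
  simpa [Fin.ext_iff] using h2

/-- the first `|ν|` entries of `w`, as an element of `l(ν)` (junk value if `headCond` fails). -/
noncomputable def headLbl {nu mu : Finset X} (hn : nu ⊆ mu) (w : Lbl mu) : Lbl nu :=
  if hw : headCond nu w then Equiv.ofBijective _ (head_bij hn w hw)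
  else Classical.choice (lbl_nonempty nu)

lemma headLbl_coe {nu mu : Finset X} (hn : nu ⊆ mu) (w : Lbl mu) (hw : headCond nu w)
    (i : Fin nu.card) :
    ((headLbl hn w) i : X) = (w (Fin.castLE (Finset.card_le_card hn) i) : X) := by
  rw [headLbl, dif_pos hw]; rfl

lemma not_mem_of_ge {nu mu : Finset X} (hn : nu ⊆ mu) {w : Lbl mu} (hw : headCond nu w)
    {j : Fin mu.card} (hj : nu.card ≤ (j : ℕ)) : (w j : X) ∉ nu := by
  intro hmem
  obtain ⟨i, hi⟩ := (head_bij hn w hw).2 ⟨(w j : X), hmem⟩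
  have h0 := congrArg Subtype.val hi
  dsimp only at h0
  have h1 := w.injective (Subtype.ext h0)
  have h2 : (i : ℕ) = (j : ℕ) := by rw [← Fin.ext_iff.mp h1]; simp
  have := i.isLt
  omega

lemma tail_bij {nu mu : Finset X} (hn : nu ⊆ mu) (w : Lbl mu) (hw : headCond nu w) :
    Function.Bijective (fun i : Fin (mu \ nu).card =>
      (⟨(w ⟨(i : ℕ) + nu.card, by
            have h1 := Finset.card_sdiff_of_subset hn; have h2 := i.isLt
            have h3 := Finset.card_le_card hn; omega⟩ : X),
        Finset.mem_sdiff.mpr ⟨(w _).2, not_mem_of_ge hn hw (by simp)⟩⟩ :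
        {x // x ∈ mu \ nu})) := by
  rw [Fintype.bijective_iff_injective_and_card]
  refine ⟨fun a b hab => ?_, by simp⟩
  have h1 := congrArg Subtype.val hab
  dsimp only at h1
  have h2 := w.injective (Subtype.ext h1)
  simpa [Fin.ext_iff] using h2

/-- the tail of `w` past position `|ν|`, as an element of `l(μ∖ν)` (junk if `headCond` fails). -/
noncomputable def tailLbl {nu mu : Finset X} (hn : nu ⊆ mu) (w : Lbl mu) : Lbl (mu \ nu) :=
  if hw : headCond nu w then Equiv.ofBijective _ (tail_bij hn w hw)
  else Classical.choice (lbl_nonempty _)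

lemma tailLbl_coe {nu mu : Finset X} (hn : nu ⊆ mu) (w : Lbl mu) (hw : headCond nu w)
    (i : Fin (mu \ nu).card) :
    ((tailLbl hn w) i : X) = (w ⟨(i : ℕ) + nu.card, by
      have h1 := Finset.card_sdiff_of_subset hn; have h2 := i.isLt
      have h3 := Finset.card_le_card hn; omega⟩ : X) := by
  rw [tailLbl, dif_pos hw]; rfl

lemma extLbl_head_tail {nu mu : Finset X} (hn : nu ⊆ mu) (w : Lbl mu) (hw : headCond nu w) :
    extLbl hn (headLbl hn w) (tailLbl hn w) = w := by
  refine Equiv.ext fun j => Subtype.ext ?_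
  by_cases hj : (j : ℕ) < nu.card
  · rw [extLbl_coe_lt hn _ _ j hj, headLbl_coe hn w hw]
    exact congrArg (fun i => (w i : X)) (Fin.ext (by simp))
  · rw [extLbl_coe_ge hn _ _ j (by omega), tailLbl_coe hn w hw]
    exact congrArg (fun i => (w i : X)) (Fin.ext (by simp; omega))

lemma iotaMat_entry {nu mu : Finset X} (hn : nu ⊆ mu) (x : Mlam nu) (w w' : Lbl mu) :
    iotaMat hn x w w' =
      ∑ s : Lbl nu, ∑ t : Lbl nu, ∑ u : Lbl (mu \ nu),
        (if extLbl hn s u = w ∧ extLbl hn t u = w' then x s t else 0) := by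
  simp only [iotaMat, Matrix.sum_apply, Matrix.smul_apply, Matrix.single,
    Matrix.of_apply, smul_eq_mul]
  refine Finset.sum_congr rfl fun s _ => Finset.sum_congr rfl fun t _ =>
    Finset.sum_congr rfl fun u _ => ?_
  split_ifs <;> simp

lemma iotaMat_apply_eq {nu mu : Finset X} (hn : nu ⊆ mu) (x : Mlam nu) (w w' : Lbl mu)
    (hw : headCond nu w) (hw' : headCond nu w')
    (ht : ∀ j : Fin mu.card, nu.card ≤ (j : ℕ) → (w j : X) = (w' j : X)) :
    iotaMat hn x w w' = x (headLbl hn w) (headLbl hn w') := by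
  have htail : tailLbl hn w = tailLbl hn w' := by
    refine Equiv.ext fun i => Subtype.ext ?_
    rw [tailLbl_coe hn w hw i, tailLbl_coe hn w' hw' i]
    exact ht _ (by simp)
  have hWw : extLbl hn (headLbl hn w) (tailLbl hn w) = w := extLbl_head_tail hn w hw
  have hWw' : extLbl hn (headLbl hn w') (tailLbl hn w) = w' := by
    rw [htail]; exact extLbl_head_tail hn w' hw'
  rw [iotaMat_entry]
  rw [Finset.sum_eq_single (headLbl hn w)]
  rotate_left
  · intro s _ hs
    refine Finset.sum_eq_zero fun t _ => Finset.sum_eq_zero fun u _ => ?_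
    rw [if_neg]
    rintro ⟨h1, -⟩
    exact hs (extLbl_inj hn (h1.trans hWw.symm)).1
  · intro hmem; exact absurd (Finset.mem_univ _) hmem
  rw [Finset.sum_eq_single (headLbl hn w')]
  rotate_left
  · intro t _ htne
    refine Finset.sum_eq_zero fun u _ => ?_
    rw [if_neg]
    rintro ⟨-, h2⟩
    exact htne (extLbl_inj hn (h2.trans hWw'.symm)).1
  · intro hmem; exact absurd (Finset.mem_univ _) hmem
  rw [Finset.sum_eq_single (tailLbl hn w)]
  rotate_left
  · intro u _ hu
    rw [if_neg]
    rintro ⟨h1, -⟩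
    exact hu (extLbl_inj hn (h1.trans hWw.symm)).2
  · intro hmem; exact absurd (Finset.mem_univ _) hmem
  rw [if_pos ⟨hWw, hWw'⟩]

lemma iotaMat_apply_ne {nu mu : Finset X} (hn : nu ⊆ mu) (x : Mlam nu) (w w' : Lbl mu)
    (hcond : ¬ (headCond nu w ∧ headCond nu w' ∧
      ∀ j : Fin mu.card, nu.card ≤ (j : ℕ) → (w j : X) = (w' j : X))) :
    iotaMat hn x w w' = 0 := by
  rw [iotaMat_entry]
  refine Finset.sum_eq_zero fun s _ => Finset.sum_eq_zero fun t _ =>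
    Finset.sum_eq_zero fun u _ => ?_
  rw [if_neg]
  rintro ⟨h1, h2⟩
  subst h1; subst h2
  refine hcond ⟨headCond_extLbl hn s u, headCond_extLbl hn t u, fun j hj => ?_⟩
  rw [extLbl_coe_ge hn s u j hj, extLbl_coe_ge hn t u j hj]

lemma iotaMat_id {mu : Finset X} (h : mu ⊆ mu) (x : Mlam mu) : iotaMat h x = x := by
  ext w w'
  rw [iotaMat_apply_eq h x w w' (fun j _ => (w j).2) (fun j _ => (w' j).2)
      (fun j hj => absurd j.isLt (by omega))]
  have hh : ∀ v : Lbl mu, headLbl h v = v := by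
    intro v
    refine Equiv.ext fun i => Subtype.ext ?_
    rw [headLbl_coe h v (fun j _ => (v j).2) i]
    exact congrArg (fun k => (v k : X)) (Fin.ext (by simp))
  rw [hh w, hh w']

/-- compression of `y ∈ M_μ` to the `λ`-corner determined by `u0`. -/
def compr {lam mu : Finset X} (h : lam ⊆ mu) (u0 : Lbl (mu \ lam)) (y : Mlam mu) : Mlam lam :=
  y.submatrix (fun r => extLbl h r u0) (fun r => extLbl h r u0)

lemma compr_norm_le {lam mu : Finset X} (h : lam ⊆ mu) (u0 : Lbl (mu \ lam)) (y : Mlam mu) :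
    ‖compr h u0 y‖ ≤ ‖y‖ := by
  classical
  set f : Lbl lam → Lbl mu := fun r => extLbl h r u0 with hf
  have hfinj : Function.Injective f := fun a b hab => (extLbl_inj h hab).1
  set V : Matrix (Lbl mu) (Lbl lam) ℂ := ∑ r : Lbl lam, Matrix.single (f r) r 1 with hV
  have hV_apply : ∀ (b : Lbl mu) (r' : Lbl lam), V b r' = if b = f r' then 1 else 0 := by
    intro b r'
    rw [hV, Matrix.sum_apply]
    rw [Finset.sum_eq_single r']
    · simp only [Matrix.single, Matrix.of_apply]
      split_ifs with h1 h2 h2 <;> simp_all <;> tauto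
    · intro q _ hq
      simp only [Matrix.single, Matrix.of_apply]
      rw [if_neg]; rintro ⟨-, h2⟩; exact hq h2
    · intro hmem; exact absurd (Finset.mem_univ _) hmem
  have hVc_apply : ∀ (r : Lbl lam) (b : Lbl mu), Vᴴ r b = if b = f r then 1 else 0 := by
    intro r b
    rw [Matrix.conjTranspose_apply, hV_apply]
    split_ifs <;> simp
  have key : Vᴴ * y * V = compr h u0 y := by
    ext r r'
    rw [Matrix.mul_assoc, Matrix.mul_apply]
    have hyV : (y * V) (f r) r' = y (f r) (f r') := by
      rw [Matrix.mul_apply]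
      rw [Finset.sum_eq_single (f r')]
      · rw [hV_apply, if_pos rfl, mul_one]
      · intro b _ hb; rw [hV_apply, if_neg hb, mul_zero]
      · intro hmem; exact absurd (Finset.mem_univ _) hmem
    rw [Finset.sum_eq_single (f r)]
    · rw [hVc_apply, if_pos rfl, one_mul, hyV]; rfl
    · intro b _ hb; rw [hVc_apply, if_neg hb, zero_mul]
    · intro hmem; exact absurd (Finset.mem_univ _) hmem
  have hVV : Vᴴ * V = (1 : Mlam lam) := by
    ext a b
    rw [Matrix.mul_apply]
    rw [Finset.sum_eq_single (f a)]
    · rw [hVc_apply, if_pos rfl, one_mul, hV_apply, Matrix.one_apply]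
      by_cases hab : a = b
      · rw [if_pos hab, if_pos (by rw [hab])]
      · rw [if_neg hab, if_neg (fun hc => hab (hfinj hc))]
    · intro c _ hc; rw [hVc_apply, if_neg hc, zero_mul]
    · intro hmem; exact absurd (Finset.mem_univ _) hmem
  have hone : ‖(1 : Mlam lam)‖ ≤ 1 := by
    have e1 : (1 : Mlam lam) = ∑ r : Lbl lam, Matrix.single r r (1 : ℂ) := by
      ext a b
      rw [Matrix.sum_apply, Finset.sum_eq_single a]
      · simp [Matrix.single, Matrix.one_apply]
      · intro c _ hc
        simp only [Matrix.single, Matrix.of_apply]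
        rw [if_neg]; rintro ⟨h1, -⟩; exact hc h1
      · intro hmem; exact absurd (Finset.mem_univ _) hmem
    rw [e1]
    exact norm_sum_std_le_one Function.injective_id Function.injective_id
  have hVn : ‖V‖ ≤ 1 := by
    have h2 : ‖V‖ * ‖V‖ = ‖(1 : Mlam lam)‖ := by
      rw [← hVV, Matrix.l2_opNorm_conjTranspose_mul_self]
    nlinarith [norm_nonneg V]
  calc ‖compr h u0 y‖ = ‖Vᴴ * y * V‖ := by rw [key]
    _ ≤ ‖Vᴴ * y‖ * ‖V‖ := Matrix.l2_opNorm_mul _ _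
    _ ≤ (‖Vᴴ‖ * ‖y‖) * ‖V‖ :=
        mul_le_mul_of_nonneg_right (Matrix.l2_opNorm_mul _ _) (norm_nonneg _)
    _ = (‖V‖ * ‖y‖) * ‖V‖ := by rw [Matrix.l2_opNorm_conjTranspose]
    _ = ‖y‖ * (‖V‖ * ‖V‖) := by ring
    _ ≤ ‖y‖ * 1 := mul_le_mul_of_nonneg_left (by nlinarith [norm_nonneg V]) (norm_nonneg y)
    _ = ‖y‖ := mul_one _

lemma headCond_extLbl_iff {nu lam mu : Finset X} (hn : nu ⊆ lam) (h : lam ⊆ mu)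
    (r : Lbl lam) (u0 : Lbl (mu \ lam)) :
    headCond nu (extLbl h r u0) ↔ headCond nu r := by
  have hc1 : nu.card ≤ lam.card := Finset.card_le_card hn
  constructor
  · intro hw j hj
    have h1 := hw (Fin.castLE (Finset.card_le_card h) j) (by simpa using hj)
    rwa [extLbl_coe_lt h r u0 _ (by simpa using lt_of_lt_of_le hj hc1)] at h1
  · intro hw j hj
    rw [extLbl_coe_lt h r u0 j (by omega)]
    exact hw ⟨(j : ℕ), by omega⟩ hj

lemma tailEq_extLbl_iff {nu lam mu : Finset X} (hn : nu ⊆ lam) (h : lam ⊆ mu)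
    (r r' : Lbl lam) (u0 : Lbl (mu \ lam)) :
    (∀ j : Fin mu.card, nu.card ≤ (j : ℕ) →
        ((extLbl h r u0) j : X) = ((extLbl h r' u0) j : X)) ↔
    (∀ j : Fin lam.card, nu.card ≤ (j : ℕ) → (r j : X) = (r' j : X)) := by
  have hc2 : lam.card ≤ mu.card := Finset.card_le_card h
  constructor
  · intro H j hj
    have h1 := H (Fin.castLE hc2 j) (by simpa using hj)
    rwa [extLbl_coe_lt h r u0 _ (by simpa using j.isLt),
      extLbl_coe_lt h r' u0 _ (by simpa using j.isLt)] at h1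
  · intro H j hj
    by_cases hjl : (j : ℕ) < lam.card
    · rw [extLbl_coe_lt h r u0 j hjl, extLbl_coe_lt h r' u0 j hjl]
      exact H ⟨(j : ℕ), hjl⟩ hj
    · rw [extLbl_coe_ge h r u0 j (by omega), extLbl_coe_ge h r' u0 j (by omega)]

lemma headLbl_extLbl {nu lam mu : Finset X} (hn : nu ⊆ lam) (h : lam ⊆ mu)
    (r : Lbl lam) (u0 : Lbl (mu \ lam)) (hw : headCond nu r) :
    headLbl (hn.trans h) (extLbl h r u0) = headLbl hn r := by
  have hc1 : nu.card ≤ lam.card := Finset.card_le_card hn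
  refine Equiv.ext fun i => Subtype.ext ?_
  rw [headLbl_coe _ _ ((headCond_extLbl_iff hn h r u0).mpr hw) i, headLbl_coe hn r hw i,
    extLbl_coe_lt h r u0 _ (by simpa using lt_of_lt_of_le i.isLt hc1)]
  exact congrArg (fun k => (r k : X)) (Fin.ext (by simp))

lemma compr_iotaMat_of_subset {nu lam mu : Finset X} (hn : nu ⊆ lam) (h : lam ⊆ mu)
    (u0 : Lbl (mu \ lam)) (x : Mlam nu) :
    compr h u0 (iotaMat (hn.trans h) x) = iotaMat hn x := by
  ext r r'
  show iotaMat (hn.trans h) x (extLbl h r u0) (extLbl h r' u0) = iotaMat hn x r r'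
  by_cases hc : headCond nu r ∧ headCond nu r' ∧
      ∀ j : Fin lam.card, nu.card ≤ (j : ℕ) → (r j : X) = (r' j : X)
  · obtain ⟨h1, h2, h3⟩ := hc
    rw [iotaMat_apply_eq _ x _ _ ((headCond_extLbl_iff hn h r u0).mpr h1)
        ((headCond_extLbl_iff hn h r' u0).mpr h2) ((tailEq_extLbl_iff hn h r r' u0).mpr h3),
      iotaMat_apply_eq hn x r r' h1 h2 h3,
      headLbl_extLbl hn h r u0 h1, headLbl_extLbl hn h r' u0 h2]
  · rw [iotaMat_apply_ne hn x r r' hc, iotaMat_apply_ne]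
    rintro ⟨h1, h2, h3⟩
    exact hc ⟨(headCond_extLbl_iff hn h r u0).mp h1, (headCond_extLbl_iff hn h r' u0).mp h2,
      (tailEq_extLbl_iff hn h r r' u0).mp h3⟩

lemma compr_iotaMat_of_not_subset {nu lam mu : Finset X} (hnm : nu ⊆ mu) (h : lam ⊆ mu)
    (u0 : Lbl (mu \ lam)) (pos : 0 < (mu \ lam).card)
    (hx0 : ((u0 ⟨0, pos⟩ : X)) ∉ nu) (hns : ¬ nu ⊆ lam) (x : Mlam nu) :
    compr h u0 (iotaMat hnm x) = 0 := by
  ext r r'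
  show iotaMat hnm x (extLbl h r u0) (extLbl h r' u0) = (0 : Mlam lam) r r'
  rw [iotaMat_apply_ne]
  · rfl
  rintro ⟨h1, -, -⟩
  by_cases hcard : nu.card ≤ lam.card
  · set f : Fin nu.card → X := fun i => (r (Fin.castLE hcard i) : X) with hf
    have hfinj : Function.Injective f := by
      intro a b hab
      have h2 := r.injective (Subtype.ext hab)
      simpa [Fin.ext_iff] using h2
    have hsub : ∀ i, f i ∈ nu ∩ lam := by
      intro i
      refine Finset.mem_inter.mpr ⟨?_, (r _).2⟩
      have h2 := h1 (Fin.castLE (Finset.card_le_card h)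
        (Fin.castLE hcard i)) (by simpa using i.isLt)
      rwa [extLbl_coe_lt h r u0 _ (by simpa using lt_of_lt_of_le i.isLt hcard)] at h2
    have hcard2 : nu.card ≤ (nu ∩ lam).card := by
      have h3 := Finset.card_le_card_of_injOn (s := Finset.univ) f (fun i _ => hsub i)
        hfinj.injOn
      simpa using h3
    have hlt : (nu ∩ lam).card < nu.card := by
      refine Finset.card_lt_card ?_
      rw [Finset.ssubset_iff_subset_ne]
      exact ⟨Finset.inter_subset_left, fun he => hns (Finset.inter_eq_left.mp he)⟩
    omega
  · push_neg at hcard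
    have hlt : lam.card < mu.card := lt_of_lt_of_le hcard (Finset.card_le_card hnm)
    have h2 := h1 ⟨lam.card, hlt⟩ (by simpa using hcard)
    rw [extLbl_coe_ge h r u0 _ (by simp)] at h2
    have e0 : (⟨lam.card - lam.card, card_sdiff_aux h hlt (by omega)⟩ :
        Fin (mu \ lam).card) = ⟨0, pos⟩ := Fin.ext (by simp)
    rw [e0] at h2
    exact hx0 h2

/-- `F` is a good control set for `c`: compressions along fresh base points recover
earlier coordinates. -/
def GoodF (c : ProdM X) (F : Finset X) : Prop :=
  ∀ (lam mu : Finset X) (h : lam ⊆ mu) (u0 : Lbl (mu \ lam)) (pos : 0 < (mu \ lam).card),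
    (u0 ⟨0, pos⟩ : X) ∉ F → compr h u0 (c mu) = c lam

lemma exists_goodF {c : ProdM X} (hc : c ∈ Nspan X) : ∃ F, GoodF c F := by
  induction hc using Submodule.span_induction with
  | mem x hx =>
    obtain ⟨nu, hx2⟩ := Set.mem_iUnion.mp hx
    obtain ⟨y, rfl⟩ := hx2
    refine ⟨nu, fun lam mu h u0 pos hx0 => ?_⟩
    show compr h u0 (if h2 : nu ⊆ mu then iotaMat h2 y else 0) =
      (if h1 : nu ⊆ lam then iotaMat h1 y else 0)
    by_cases h1 : nu ⊆ lam
    · rw [dif_pos (h1.trans h), dif_pos h1]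
      exact compr_iotaMat_of_subset h1 h u0 y
    · by_cases h2 : nu ⊆ mu
      · rw [dif_pos h2, dif_neg h1]
        exact compr_iotaMat_of_not_subset h2 h u0 pos hx0 h1 y
      · rw [dif_neg h2, dif_neg fun hh => h2 (hh.trans h)]
        ext r r'; rfl
  | zero =>
    refine ⟨∅, fun lam mu h u0 pos _ => ?_⟩
    show compr h u0 ((0 : ProdM X) mu) = (0 : ProdM X) lam
    rw [lp.coeFn_zero]
    ext r r'; rfl
  | add x y hx hy ihx ihy =>
    obtain ⟨F1, hF1⟩ := ihx
    obtain ⟨F2, hF2⟩ := ihy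
    refine ⟨F1 ∪ F2, fun lam mu h u0 pos hx0 => ?_⟩
    have e1 : ((x + y : ProdM X) : ∀ mu, Mlam mu) = ⇑x + ⇑y := lp.coeFn_add x y
    rw [e1]
    show compr h u0 (x mu + y mu) = x lam + y lam
    have e2 : compr h u0 (x mu + y mu) = compr h u0 (x mu) + compr h u0 (y mu) := by
      ext r r'; rfl
    rw [e2, hF1 lam mu h u0 pos (fun hm => hx0 (Finset.mem_union_left _ hm)),
      hF2 lam mu h u0 pos (fun hm => hx0 (Finset.mem_union_right _ hm))]
  | smul a x hx ih =>
    obtain ⟨F, hF⟩ := ih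
    refine ⟨F, fun lam mu h u0 pos hx0 => ?_⟩
    have e1 : ((a • x : ProdM X) : ∀ mu, Mlam mu) = a • ⇑x := lp.coeFn_smul a x
    rw [e1]
    show compr h u0 (a • x mu) = a • x lam
    have e2 : compr h u0 (a • x mu) = a • compr h u0 (x mu) := by
      ext r r'; rfl
    rw [e2, hF lam mu h u0 pos hx0]

lemma norm_apply_le_of_good {b c : ProdM X} {F lam mu : Finset X} (hgood : GoodF c F)
    {x0 : X} (hx0lam : x0 ∉ lam) (hx0F : x0 ∉ F) (hsub : lam ⊆ mu) (hx0mu : x0 ∈ mu) :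
    ‖b lam‖ ≤ 2 * ‖b - c‖ + ‖b mu‖ := by
  have pos : 0 < (mu \ lam).card :=
    Finset.card_pos.mpr ⟨x0, Finset.mem_sdiff.mpr ⟨hx0mu, hx0lam⟩⟩
  obtain ⟨u0, hu0⟩ := lbl_head_exists (mu \ lam) x0
    (Finset.mem_sdiff.mpr ⟨hx0mu, hx0lam⟩) pos
  have hcl : compr hsub u0 (c mu) = c lam :=
    hgood lam mu hsub u0 pos (by rw [hu0]; exact hx0F)
  have h1 : ‖b lam‖ ≤ ‖b lam - c lam‖ + ‖c lam‖ := by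
    have := norm_add_le (b lam - c lam) (c lam)
    simpa using this
  have h2 : ‖b lam - c lam‖ ≤ ‖b - c‖ := by
    have e1 : b lam - c lam = (b - c) lam := by rw [lp.coeFn_sub]; rfl
    rw [e1]
    exact lp.norm_apply_le_norm ENNReal.top_ne_zero _ _
  have h3 : ‖c lam‖ ≤ ‖b - c‖ + ‖b mu‖ := by
    calc ‖c lam‖ = ‖compr hsub u0 (c mu)‖ := by rw [hcl]
      _ ≤ ‖c mu‖ := compr_norm_le hsub u0 _
      _ ≤ ‖c mu - b mu‖ + ‖b mu‖ := by
          have := norm_add_le (c mu - b mu) (b mu); simpa using this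
      _ ≤ ‖b - c‖ + ‖b mu‖ := by
          have e1 : c mu - b mu = -((b - c) mu) := by rw [lp.coeFn_sub]; simp
          rw [e1, norm_neg]
          exact add_le_add (lp.norm_apply_le_norm ENNReal.top_ne_zero _ _) le_rfl
  linarith

lemma exists_commonMu [Infinite X] (b1 b2 : ProdM X) (h1 : b1 ∈ carrierA X)
    (h2 : b2 ∈ carrierA X) {lam1 lam2 : Finset X} (hb1 : b1 lam1 ≠ 0) (hb2 : b2 lam2 ≠ 0) :
    ∃ mu : Finset X, b1 mu ≠ 0 ∧ b2 mu ≠ 0 := by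
  have hd1 : (0 : ℝ) < ‖b1 lam1‖ := norm_pos_iff.mpr hb1
  have hd2 : (0 : ℝ) < ‖b2 lam2‖ := norm_pos_iff.mpr hb2
  obtain ⟨c1, hc1mem, hc1⟩ := Metric.mem_closure_iff.mp h1 (‖b1 lam1‖ / 3) (by linarith)
  obtain ⟨c2, hc2mem, hc2⟩ := Metric.mem_closure_iff.mp h2 (‖b2 lam2‖ / 3) (by linarith)
  rw [dist_eq_norm] at hc1 hc2
  obtain ⟨F1, hF1⟩ := exists_goodF (SetLike.mem_coe.mp hc1mem)
  obtain ⟨F2, hF2⟩ := exists_goodF (SetLike.mem_coe.mp hc2mem)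
  obtain ⟨x0, hx0⟩ := Infinite.exists_notMem_finset (lam1 ∪ lam2 ∪ F1 ∪ F2)
  simp only [Finset.mem_union, not_or] at hx0
  obtain ⟨⟨⟨hx01, hx02⟩, hxF1⟩, hxF2⟩ := hx0
  refine ⟨insert x0 (lam1 ∪ lam2), ?_, ?_⟩
  · have key := norm_apply_le_of_good (b := b1) hF1 hx01 hxF1
      (mu := insert x0 (lam1 ∪ lam2))
      (fun a ha => Finset.mem_insert_of_mem (Finset.mem_union_left _ ha))
      (Finset.mem_insert_self _ _)
    intro hzero
    rw [hzero, norm_zero] at key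
    linarith
  · have key := norm_apply_le_of_good (b := b2) hF2 hx02 hxF2
      (mu := insert x0 (lam1 ∪ lam2))
      (fun a ha => Finset.mem_insert_of_mem (Finset.mem_union_right _ ha))
      (Finset.mem_insert_self _ _)
    intro hzero
    rw [hzero, norm_zero] at key
    linarith

lemma mul_std_mul {n : Type*} [Fintype n] [DecidableEq n] (M N : Matrix n n ℂ)
    (s t s' t' : n) :
    (M * Matrix.single s t (1 : ℂ) * N) s' t' = M s' s * N t t' := by
  rw [Matrix.mul_apply]
  rw [Finset.sum_eq_single t]
  · rw [Matrix.mul_single_apply_same, mul_one]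
  · intro l _ hl
    rw [Matrix.mul_single_apply_of_ne (c := (1 : ℂ)) (i := s) (j := t) (a := s') (b := l) (hbj := hl), zero_mul]
  · intro hmem; exact absurd (Finset.mem_univ _) hmem

end AuxPrime
/- STATEMENT 18: `A` is prime: any two nonzero closed two-sided ideals of `A` have
nonzero intersection. -/
theorem stmt18 [Uncountable X] (I1 I2 : Set (ProdM X))
    (hI1 : IsClosedIdealIn (carrierA X) I1) (hI2 : IsClosedIdealIn (carrierA X) I2)
    (hne1 : ∃ x ∈ I1, x ≠ 0) (hne2 : ∃ x ∈ I2, x ≠ 0) :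
    ∃ x, x ∈ I1 ∧ x ∈ I2 ∧ x ≠ 0 := by
  classical
  obtain ⟨b1, hb1I, hb1ne⟩ := hne1
  obtain ⟨b2, hb2I, hb2ne⟩ := hne2
  obtain ⟨hsub1, -, -, habs1⟩ := hI1
  obtain ⟨hsub2, -, -, habs2⟩ := hI2
  have hex1 : ∃ lam : Finset X, b1 lam ≠ 0 := by
    by_contra hcon
    push_neg at hcon
    exact hb1ne (lp.ext (funext fun lam => by rw [hcon lam]; rfl))
  have hex2 : ∃ lam : Finset X, b2 lam ≠ 0 := by
    by_contra hcon
    push_neg at hcon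
    exact hb2ne (lp.ext (funext fun lam => by rw [hcon lam]; rfl))
  obtain ⟨lam1, hlam1⟩ := hex1
  obtain ⟨lam2, hlam2⟩ := hex2
  obtain ⟨mu, hm1, hm2⟩ := exists_commonMu b1 b2 (hsub1 hb1I) (hsub2 hb2I) hlam1 hlam2
  obtain ⟨s', s, hs⟩ : ∃ s' s, b1 mu s' s ≠ 0 := by
    by_contra hcon
    push_neg at hcon
    exact hm1 (by ext a b; rw [hcon a b]; rfl)
  obtain ⟨t, t', ht⟩ : ∃ t t', b2 mu t t' ≠ 0 := by
    by_contra hcon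
    push_neg at hcon
    exact hm2 (by ext a b; rw [hcon a b]; rfl)
  set a : ProdM X := iotaElem mu (Matrix.single s t 1) with ha
  have haA : a ∈ carrierA X :=
    subset_closure (Submodule.subset_span (Set.mem_iUnion.mpr ⟨mu, Set.mem_range_self _⟩))
  refine ⟨b1 * a * b2, ?_, ?_, ?_⟩
  · exact (habs1 b2 (hsub2 hb2I) (b1 * a) (habs1 a haA b1 hb1I).2).2
  · have h1 : a * b2 ∈ I2 := (habs2 a haA b2 hb2I).1
    have h2 := (habs2 b1 (hsub1 hb1I) (a * b2) h1).1
    rwa [← mul_assoc] at h2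
  · intro hz
    have e1 : (b1 * a * b2) mu = b1 mu * a mu * b2 mu := by
      have g1 : ⇑(b1 * a * b2) = ⇑(b1 * a) * ⇑b2 := lp.infty_coeFn_mul _ _
      have g2 : ⇑(b1 * a) = ⇑b1 * ⇑a := lp.infty_coeFn_mul _ _
      rw [g1, g2]; rfl
    have e2 : a mu = Matrix.single s t 1 := by
      show (if h : mu ⊆ mu then iotaMat h (Matrix.single s t 1) else 0) = _
      rw [dif_pos (Finset.Subset.refl mu), iotaMat_id]
    have e3 : (b1 * a * b2) mu s' t' = b1 mu s' s * b2 mu t t' := by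
      rw [e1, e2, mul_std_mul]
    rw [hz] at e3
    have e4 : ((0 : ProdM X) mu : Mlam mu) s' t' = 0 := by rw [lp.coeFn_zero]; rfl
    rw [e4] at e3
    exact mul_ne_zero hs ht e3.symm
end
end
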